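/- arXiv:1606.01214 — 2 statements merged into one kernel-verified Lean document; each statement's English description precedes it below -/
import Mathlib

section
/- Fix λ ∈ (0,1), C > 0, and p ∈ (0,1). Let (a_n)_{n∈ℕ} be a sequence of non-negative real numbers satisfying the restricted subadditivity condition a_{n+m} ≤ a_n + a_m + C n^p for all n, m ∈ ℕ with n^p ≤ m ≤ λ n, together with a_n ≤ C n for all n ∈ ℕ. Then the limit lim_{n→∞} a_n / n exists and is finite. -/
/-!
Write `N = S + k m` with `m / λ < S ≤ m / λ + m + 1` and attach the `k` blocks of length `m` to
`S` one at a time: every step is admissible while `N ^ p ≤ m` and costs at most `C N ^ p`. With a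
fixed block length `n` this gives `a_N / N ≤ a_n / n + ε` for `c n ≤ N ≤ (t n) ^ (1 / p)`, where
`c` and `t` depend on `ε`. Beyond that range fix `p < q ^ 2 < q < 1` and prove the stronger bound
`a_N ≤ γ N - N ^ q` by strong induction, with blocks of length `⌈N ^ q⌉`: as `p < q ^ 2`, the
slack `k m ^ q` given up by the blocks dominates their error `k C N ^ p`. Hence
`limsup a_N / N ≤ a_n / n + ε` for all large `n`, and the limsup equals the liminf.
-/

open Filter Topology

lemma eventually_mul_rpow_le_rpow {r s : ℝ} (c : ℝ) (hrs : r < s) :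
    ∀ᶠ x : ℝ in atTop, c * x ^ r ≤ x ^ s := by
  filter_upwards [(tendsto_rpow_atTop (sub_pos.2 hrs)).eventually_ge_atTop c,
    eventually_gt_atTop 0] with x hc hx
  calc c * x ^ r ≤ x ^ (s - r) * x ^ r := by gcongr
    _ = x ^ s := by rw [← Real.rpow_add hx, sub_add_cancel]

lemma eventually_mul_add_one_le_rpow_rpow {p q t : ℝ} (c : ℝ) (hp : 0 < p) (hpq : p < q)
    (ht : 0 < t) : ∀ᶠ x : ℝ in atTop, c * x + 1 ≤ ((t * x) ^ p⁻¹) ^ q := by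
  have hpow : ∀ᶠ y : ℝ in atTop, (c / t + 1) * y ^ (1 : ℝ) ≤ y ^ (p⁻¹ * q) :=
    eventually_mul_rpow_le_rpow _ ((one_lt_inv_mul₀ hp).2 hpq)
  filter_upwards [(tendsto_id.const_mul_atTop ht).eventually (hpow.and (eventually_ge_atTop 1))]
    with x ⟨hx, hx1⟩
  rw [id, Real.rpow_one] at hx
  rw [id] at hx1
  rw [← Real.rpow_mul (by linarith)]
  have : c * x = c / t * (t * x) := by field_simp
  linarith

lemma exists_tendsto_of_eventually_le_add {b : ℕ → ℝ} (hb : BddBelow (Set.range b))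
    (h : ∀ ε > 0, ∀ᶠ n in atTop, ∀ᶠ N in atTop, b N ≤ b n + ε) :
    ∃ l, Tendsto b atTop (𝓝 l) := by
  have hlow : IsBoundedUnder (· ≥ ·) atTop b := hb.isBoundedUnder_of_range
  have hup : IsBoundedUnder (· ≤ ·) atTop b := by
    obtain ⟨n, hn⟩ := (h 1 one_pos).exists
    exact ⟨b n + 1, hn⟩
  refine ⟨_, tendsto_of_liminf_eq_limsup rfl ?_ hup hlow⟩
  refine le_antisymm (le_of_forall_pos_le_add fun ε hε => ?_) (liminf_le_limsup hup hlow)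
  have : ∀ᶠ n in atTop, limsup b atTop - ε ≤ b n := (h ε hε).mono fun n hn =>
    sub_le_iff_le_add.2 (limsup_le_of_le hlow.isCoboundedUnder_le hn)
  linarith [le_liminf_of_le hup.isCoboundedUnder_ge this]

def RestrictedSubadditive (lam C p : ℝ) (a : ℕ → ℝ) : Prop :=
  ∀ n m : ℕ, 1 ≤ n → 1 ≤ m → (n : ℝ) ^ p ≤ (m : ℝ) → (m : ℝ) ≤ lam * n →
    a (n + m) ≤ a n + a m + C * (n : ℝ) ^ p

namespace RestrictedSubadditive

variable {lam C p : ℝ} {a : ℕ → ℝ}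

theorem apply_add_mul_le (hsub : RestrictedSubadditive lam C p a) (hlam : 0 ≤ lam)
    (hC : 0 ≤ C) (hp : 0 ≤ p) {m S : ℕ} (hm : 1 ≤ m) (hS : 1 ≤ S) (hmS : (m : ℝ) ≤ lam * S) :
    ∀ k : ℕ, ((S + k * m : ℕ) : ℝ) ^ p ≤ m →
      a (S + k * m) ≤ a S + k * a m + C * k * ((S + k * m : ℕ) : ℝ) ^ p
  | 0, _ => by simp
  | k + 1, hpow => by
    rw [show S + (k + 1) * m = (S + k * m) + m by ring] at hpow ⊢
    have hmono : ((S + k * m : ℕ) : ℝ) ^ p ≤ ((S + k * m + m : ℕ) : ℝ) ^ p :=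
      Real.rpow_le_rpow (by positivity) (by exact_mod_cast Nat.le_add_right _ _) hp
    have hstep := hsub (S + k * m) m (by omega) hm (hmono.trans hpow) <| hmS.trans <| by
      gcongr; exact_mod_cast Nat.le_add_right S (k * m)
    have ih := apply_add_mul_le hsub hlam hC hp hm hS hmS k (hmono.trans hpow)
    push_cast at hstep ih hmono ⊢
    nlinarith [mul_le_mul_of_nonneg_left hmono (mul_nonneg hC (k.cast_nonneg : (0 : ℝ) ≤ k))]

theorem exists_eq_add_mul_le (hsub : RestrictedSubadditive lam C p a) (hlam : 0 < lam)
    (hC : 0 ≤ C) (hp : 0 ≤ p) {m N : ℕ} (hm : 1 ≤ m) (hN : (m : ℝ) / lam + 1 ≤ N)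
    (hNm : (N : ℝ) ^ p ≤ m) :
    ∃ S k : ℕ, N = S + k * m ∧ 1 ≤ S ∧ (m : ℝ) ≤ lam * S ∧ (S : ℝ) ≤ m / lam + m + 1 ∧
      a N ≤ a S + k * a m + C * k * (N : ℝ) ^ p := by
  set S₀ := ⌊(m : ℝ) / lam⌋₊ + 1
  have hS₀ : (m : ℝ) / lam < S₀ := by push_cast [S₀]; exact Nat.lt_floor_add_one _
  have hS₀' : (S₀ : ℝ) ≤ m / lam + 1 := by
    push_cast [S₀]; linarith [Nat.floor_le (by positivity : (0 : ℝ) ≤ m / lam)]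
  have hS₀N : S₀ ≤ N := by exact_mod_cast hS₀'.trans hN
  have hdec : N = (S₀ + (N - S₀) % m) + (N - S₀) / m * m := by
    have := Nat.mod_add_div' (N - S₀) m; omega
  set S := S₀ + (N - S₀) % m
  set k := (N - S₀) / m
  have hS : (S₀ : ℝ) ≤ S := by exact_mod_cast Nat.le_add_right _ _
  have hSm : (S : ℝ) < S₀ + m := by exact_mod_cast Nat.add_lt_add_left (Nat.mod_lt _ hm) _
  have hmS : (m : ℝ) ≤ lam * S := by rw [← div_le_iff₀' hlam]; linarith
  refine ⟨S, k, hdec, by omega, hmS, by linarith, ?_⟩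
  rw [hdec] at hNm ⊢
  exact hsub.apply_add_mul_le hlam.le hC hp hm (by omega) hmS k hNm

theorem apply_le_of_rpow_le (hsub : RestrictedSubadditive lam C p a) (hlam : 0 < lam)
    (hC : 0 ≤ C) (hp : 0 ≤ p) (ha : ∀ n, 0 ≤ a n) (hlin : ∀ n : ℕ, 1 ≤ n → a n ≤ C * n)
    {m N : ℕ} (hm : 1 ≤ m) (hN : (m : ℝ) / lam + 1 ≤ N) (hNm : (N : ℝ) ^ p ≤ m) :
    a N ≤ (a m / m + C * (N : ℝ) ^ p / m) * N + C * (m / lam + m + 1) := by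
  obtain ⟨S, k, hdec, hS, -, hSm, hN⟩ := hsub.exists_eq_add_mul_le hlam hC hp hm hN hNm
  have hm0 : (0 : ℝ) < m := by exact_mod_cast hm
  have hkm : (k : ℝ) * m ≤ N := by
    rw [hdec]; push_cast; linarith [(S.cast_nonneg : (0 : ℝ) ≤ S)]
  have hblocks : (k : ℝ) * a m + C * k * (N : ℝ) ^ p
      = (k * m) * (a m / m + C * (N : ℝ) ^ p / m) := by field_simp
  calc a N ≤ a S + k * a m + C * k * (N : ℝ) ^ p := hN
    _ ≤ C * (m / lam + m + 1) + N * (a m / m + C * (N : ℝ) ^ p / m) := by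
      rw [add_assoc, hblocks]
      gcongr
      · exact (hlin S hS).trans (by gcongr)
      · exact add_nonneg (div_nonneg (ha m) hm0.le) (by positivity)
    _ = _ := by ring

theorem le_sub_rpow_of_rpow_le (hsub : RestrictedSubadditive lam C p a) (hlam : 0 < lam)
    (hC : 0 < C) (hp : 0 ≤ p) (ha : ∀ n, 0 ≤ a n) (hlin : ∀ n : ℕ, 1 ≤ n → a n ≤ C * n)
    {n N : ℕ} {ε q : ℝ} (hε : 0 < ε) (hn : 1 ≤ n)
    (hN : (1 + 3 * C / ε) * (1 / lam + 2) * n ≤ N)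
    (hNp : (N : ℝ) ^ p ≤ min 1 (ε / (3 * C)) * n) (hNq : 3 * (N : ℝ) ^ q ≤ ε * N) :
    a N ≤ (a n / n + ε) * N - (N : ℝ) ^ q := by
  have hn0 : (0 : ℝ) < n := by exact_mod_cast hn
  have hnlam : (n : ℝ) / lam + n + 1 ≤ (1 / lam + 2) * n := by
    rw [div_eq_mul_one_div, mul_comm (n : ℝ)]; linarith [(by exact_mod_cast hn : (1 : ℝ) ≤ n)]
  have hCN : 3 * C * ((1 / lam + 2) * n) ≤ ε * N := by
    have := mul_le_mul_of_nonneg_left hN hε.le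
    rw [show ε * ((1 + 3 * C / ε) * (1 / lam + 2) * n) = (ε + 3 * C) * ((1 / lam + 2) * n) by
      field_simp] at this
    nlinarith [show 0 ≤ (1 / lam + 2) * n by positivity]
  have hCNp : 3 * (C * (N : ℝ) ^ p / n) ≤ ε := by
    rw [mul_div_assoc', div_le_iff₀ hn0]
    have := mul_le_mul_of_nonneg_left
      (hNp.trans (mul_le_mul_of_nonneg_right (min_le_right _ _) hn0.le)) hC.le
    rw [show C * (ε / (3 * C) * n) = ε * n / 3 by field_simp] at this
    linarith
  have hbound := hsub.apply_le_of_rpow_le hlam hC.le hp ha hlin hn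
    (by linarith [show 0 ≤ 3 * C / ε * ((1 / lam + 2) * n) by positivity])
    (hNp.trans (mul_le_of_le_one_left hn0.le (min_le_left _ _)))
  nlinarith [mul_le_mul_of_nonneg_right hCNp (N.cast_nonneg : (0 : ℝ) ≤ N)]

theorem eventually_le_sub_rpow_of_window (hsub : RestrictedSubadditive lam C p a)
    (hlam0 : 0 < lam) (hlam1 : lam < 1) (hC : 0 ≤ C) (hp : 0 ≤ p) {q : ℝ} (hq0 : 0 < q)
    (hpq : p < q ^ 2) (hq1 : q < 1) :
    ∀ᶠ N : ℕ in atTop, ∀ γ : ℝ,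
      (∀ M : ℕ, ⌈(N : ℝ) ^ q⌉₊ ≤ M → M < N → a M ≤ γ * M - (M : ℝ) ^ q) →
        a N ≤ γ * N - (N : ℝ) ^ q := by
  have hlarge : ∀ᶠ x : ℝ in atTop, 1 ≤ x ∧ 2 * (2 / lam + 3) * x ^ q ≤ x ^ (1 : ℝ) ∧
      2 * C * x ^ p ≤ x ^ (q ^ 2) ∧ 8 * x ^ (2 * q) ≤ x ^ (1 + q ^ 2) :=
    (eventually_ge_atTop 1).and <| (eventually_mul_rpow_le_rpow _ hq1).and <|
      (eventually_mul_rpow_le_rpow _ hpq).and <|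
        eventually_mul_rpow_le_rpow _ (by linarith [sq_pos_of_pos (sub_pos.2 hq1)])
  filter_upwards [tendsto_natCast_atTop_atTop.eventually hlarge]
    with N ⟨hN1, hNS, hNp, hNq⟩ γ hwindow
  rw [Real.rpow_one] at hNS
  set m := ⌈(N : ℝ) ^ q⌉₊
  have hN0 : (0 : ℝ) < N := by linarith
  have hNq1 : 1 ≤ (N : ℝ) ^ q := Real.one_le_rpow hN1 hq0.le
  have hmq : (N : ℝ) ^ q ≤ m := Nat.le_ceil _
  have hm2 : (m : ℝ) ≤ 2 * (N : ℝ) ^ q := by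
    linarith [Nat.ceil_lt_add_one (by positivity : (0 : ℝ) ≤ (N : ℝ) ^ q)]
  have hm1 : 1 ≤ m := by exact_mod_cast hNq1.trans hmq
  have hm_half : (m : ℝ) / lam + m + 1 ≤ N / 2 := by
    have : (m : ℝ) / lam ≤ 2 / lam * (N : ℝ) ^ q := by
      rw [div_mul_eq_mul_div]; gcongr
    linarith
  have hNpm : (N : ℝ) ^ p ≤ m :=
    (Real.rpow_le_rpow_of_exponent_le hN1 (by nlinarith)).trans hmq
  obtain ⟨S, k, hdec, -, hmS, hSm, hchain⟩ :=
    hsub.exists_eq_add_mul_le hlam0 hC hp hm1 (by linarith) hNpm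
  have hdecR : (N : ℝ) = S + k * m := by exact_mod_cast hdec
  have hk0 : (0 : ℝ) ≤ k := k.cast_nonneg
  have hmS' : m ≤ S := by
    exact_mod_cast hmS.trans (mul_le_of_le_one_left S.cast_nonneg hlam1.le)
  have hSN : S < N := by exact_mod_cast (by linarith : (S : ℝ) < N)
  have haS := hwindow S hmS' hSN
  have ham := hwindow m le_rfl (by omega)
  have hk : (N : ℝ) ≤ 4 * k * (N : ℝ) ^ q := by nlinarith
  have hmqq : (N : ℝ) ^ (q ^ 2) ≤ (m : ℝ) ^ q := by
    rw [sq, Real.rpow_mul hN0.le]; exact Real.rpow_le_rpow (by positivity) hmq hq0.le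
  have h2q : (N : ℝ) ^ (2 * q) = ((N : ℝ) ^ q) ^ 2 := by
    rw [mul_comm, Real.rpow_mul hN0.le]; norm_cast
  have h1q : (N : ℝ) ^ (1 + q ^ 2) = N * (N : ℝ) ^ (q ^ 2) := by
    rw [Real.rpow_add hN0, Real.rpow_one]
  have hkY : 2 * (N : ℝ) ^ q ≤ k * (N : ℝ) ^ (q ^ 2) := by
    refine le_of_mul_le_mul_left ?_ (by positivity : (0 : ℝ) < 4 * (N : ℝ) ^ q)
    linarith [mul_le_mul_of_nonneg_right hk (by positivity : (0 : ℝ) ≤ (N : ℝ) ^ (q ^ 2))]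
  have hslack : (N : ℝ) ^ q ≤ k * (m : ℝ) ^ q - C * k * (N : ℝ) ^ p := by
    linarith [mul_le_mul_of_nonneg_left hmqq hk0, mul_le_mul_of_nonneg_left hNp hk0]
  have hγ : γ * N = γ * S + k * (γ * m) := by rw [hdecR]; ring
  linarith [mul_le_mul_of_nonneg_left ham hk0, Real.rpow_nonneg S.cast_nonneg q]

theorem eventually_forall_le_sub_rpow (hsub : RestrictedSubadditive lam C p a)
    (hlam0 : 0 < lam) (hlam1 : lam < 1) (hC : 0 ≤ C) (hp : 0 ≤ p) {q : ℝ} (hq0 : 0 < q)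
    (hpq : p < q ^ 2) (hq1 : q < 1) :
    ∀ᶠ n₁ : ℕ in atTop, ∀ γ B : ℝ, 0 ≤ B → (n₁ : ℝ) ≤ B ^ q →
      (∀ N : ℕ, n₁ ≤ N → (N : ℝ) ≤ B → a N ≤ γ * N - (N : ℝ) ^ q) →
        ∀ N : ℕ, n₁ ≤ N → a N ≤ γ * N - (N : ℝ) ^ q := by
  obtain ⟨N₀, hN₀⟩ :=
    eventually_atTop.1 (hsub.eventually_le_sub_rpow_of_window hlam0 hlam1 hC hp hq0 hpq hq1)
  filter_upwards [eventually_ge_atTop N₀] with n₁ hn₁ γ B hB hn₁B hbase N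
  induction N using Nat.strong_induction_on with
  | _ N ih =>
    intro hN
    rcases le_or_gt (N : ℝ) B with hNB | hBN
    · exact hbase N hN hNB
    · refine hN₀ N (hn₁.trans hN) γ fun M hM hMN => ih M hMN ?_
      have hBM : B ^ q ≤ M := (Real.rpow_le_rpow hB hBN.le hq0.le).trans
        ((Nat.le_ceil _).trans (by exact_mod_cast hM))
      exact_mod_cast hn₁B.trans hBM

theorem eventually_eventually_div_le_add (hsub : RestrictedSubadditive lam C p a)
    (hlam0 : 0 < lam) (hlam1 : lam < 1) (hC : 0 < C) (hp0 : 0 < p) (hp1 : p < 1)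
    (ha : ∀ n, 0 ≤ a n) (hlin : ∀ n : ℕ, 1 ≤ n → a n ≤ C * n) {ε : ℝ} (hε : 0 < ε) :
    ∀ᶠ n : ℕ in atTop, ∀ᶠ N : ℕ in atTop, a N / N ≤ a n / n + ε := by
  obtain ⟨q, hq0, hpq, hq1⟩ : ∃ q : ℝ, 0 < q ∧ p < q ^ 2 ∧ q < 1 :=
    ⟨(1 + p) / 2, by positivity, by linarith [sq_pos_of_pos (sub_pos.2 hp1)], by linarith⟩
  have hpq' : p < q := by nlinarith
  set c := (1 + 3 * C / ε) * (1 / lam + 2)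
  set t := min 1 (ε / (3 * C))
  have hc0 : 0 < c := by positivity
  have ht0 : 0 < t := by positivity
  have hsmall : ∀ᶠ N : ℕ in atTop, 3 * (N : ℝ) ^ q ≤ ε * N := by
    filter_upwards [tendsto_natCast_atTop_atTop.eventually
      (eventually_mul_rpow_le_rpow (3 / ε) hq1)] with N hN
    rwa [Real.rpow_one, div_mul_eq_mul_div, div_le_iff₀ hε, mul_comm _ ε] at hN
  have hn₁ : Tendsto (fun n : ℕ => ⌈c * n⌉₊) atTop atTop :=
    tendsto_nat_ceil_atTop.comp (tendsto_natCast_atTop_atTop.const_mul_atTop hc0)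
  filter_upwards [hn₁.eventually
      (hsub.eventually_forall_le_sub_rpow hlam0 hlam1 hC.le hp0.le hq0 hpq hq1),
    hn₁.eventually (eventually_forall_ge_atTop.2 hsmall),
    tendsto_natCast_atTop_atTop.eventually (eventually_mul_add_one_le_rpow_rpow c hp0 hpq' ht0),
    eventually_ge_atTop 1] with n hind hslack hgrowth hn
  set n₁ := ⌈c * n⌉₊
  have hn₁B : (n₁ : ℝ) ≤ ((t * n) ^ p⁻¹) ^ q :=
    (Nat.ceil_lt_add_one (by positivity)).le.trans hgrowth
  have hbase (N : ℕ) (hN : n₁ ≤ N) (hNB : (N : ℝ) ≤ (t * n) ^ p⁻¹) :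
      a N ≤ (a n / n + ε) * N - (N : ℝ) ^ q := by
    refine hsub.le_sub_rpow_of_rpow_le hlam0 hC hp0.le ha hlin hε hn
      ((Nat.le_ceil _).trans (by exact_mod_cast hN)) ?_ (hslack N hN)
    calc (N : ℝ) ^ p ≤ ((t * n) ^ p⁻¹) ^ p := Real.rpow_le_rpow (by positivity) hNB hp0.le
      _ = t * n := Real.rpow_inv_rpow (by positivity) hp0.ne'
  filter_upwards [eventually_ge_atTop n₁, eventually_gt_atTop 0] with N hN hN0
  rw [div_le_iff₀ (by exact_mod_cast hN0)]
  linarith [hind _ _ (by positivity) hn₁B hbase N hN, Real.rpow_nonneg N.cast_nonneg q]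

end RestrictedSubadditive

/-- **restricted Fekete lemma.** If `(a_n)` is a sequence of non-negative
reals with `a_{n+m} ≤ a_n + a_m + C n^p` whenever `n^p ≤ m ≤ λ n`, and `a_n ≤ C n` for all
`n`, then `lim_{n→∞} a_n / n` exists (and is finite). -/
theorem restricted_subadditive_limit (lam C p : ℝ) (hlam0 : 0 < lam) (hlam1 : lam < 1)
    (hC : 0 < C) (hp0 : 0 < p) (hp1 : p < 1) (a : ℕ → ℝ) (ha : ∀ n, 0 ≤ a n)
    (hsub : ∀ n m : ℕ, 1 ≤ n → 1 ≤ m → (n : ℝ) ^ p ≤ (m : ℝ) → (m : ℝ) ≤ lam * n →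
      a (n + m) ≤ a n + a m + C * (n : ℝ) ^ p)
    (hlin : ∀ n : ℕ, 1 ≤ n → a n ≤ C * n) :
    ∃ l : ℝ, Filter.Tendsto (fun n : ℕ => a n / n) Filter.atTop (nhds l) := by
  refine exists_tendsto_of_eventually_le_add ⟨0, ?_⟩ fun ε hε => ?_
  · rintro _ ⟨n, rfl⟩
    exact div_nonneg (ha n) n.cast_nonneg
  · exact RestrictedSubadditive.eventually_eventually_div_le_add hsub hlam0 hlam1 hC hp0 hp1 ha
      hlin hε
end

section
/- Let f, g : ℕ → ℕ be non-decreasing functions and suppose there exists n₀ ∈ ℕ such that f(n) > n and g(n) ≥ f(f(n)) for all n ≥ n₀. Let (b_n)_{n∈ℕ} be a sequence of real numbers and let χ > 0, and suppose that for every sequence (n_k)_{k∈ℕ} of positive integers with n_k → ∞ and f(n_k) ≤ n_{k+1} ≤ g(n_k) for each k, one has lim_{k→∞} b_{n_k} = χ. Then lim_{n→∞} b_n = χ. -/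
/-!
Suppose `b` does not converge to `χ`, so that `b n` lies outside a fixed neighbourhood of `χ`
for all `n` in an infinite set `S`. Walk greedily from a point beyond `n₀`: from `a`, jump into
`S` if `[f a, g a]` meets `S`, and otherwise step to `f a`. Every step is admissible, so `b`
converges to `χ` along the walk. The walk lands in `S` infinitely often: along a stretch of plain
steps `a ↦ f a` the intervals `[f a, g a]` overlap, because `f (f a) ≤ g a`, and exhaust a tail
of `ℕ`, so one of them meets `S`.
-/

open Filter Set

theorem Ici_subset_iUnion_Icc_of_le_of_tendsto {α : Type*} [LinearOrder α] {u v : ℕ → α}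
    (huv : ∀ n, u (n + 1) ≤ v n) (hv : Tendsto v atTop atTop) :
    Ici (u 0) ⊆ ⋃ n, Icc (u n) (v n) := by
  intro m hm
  obtain ⟨j, hj⟩ := (hv.eventually_ge_atTop m).exists
  rw [mem_iUnion]
  induction j with
  | zero => exact ⟨0, hm, hj⟩
  | succ j ih =>
    by_cases hmj : m ≤ v j
    · exact ih hmj
    · exact ⟨j + 1, (huv j).trans (le_of_not_ge hmj), hj⟩

section GreedyWalk

variable (f g : ℕ → ℕ) (S : Set ℕ)

open Classical in
noncomputable def greedyStep (a : ℕ) : ℕ :=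
  if h : ∃ s ∈ S, s ∈ Icc (f a) (g a) then h.choose else f a

variable {f g S} {a : ℕ}

theorem greedyStep_mem (h : ∃ s ∈ S, s ∈ Icc (f a) (g a)) :
    greedyStep f g S a ∈ S ∧ greedyStep f g S a ∈ Icc (f a) (g a) := by
  rw [greedyStep, dif_pos h]
  exact h.choose_spec

theorem greedyStep_of_not_exists (h : ¬∃ s ∈ S, s ∈ Icc (f a) (g a)) :
    greedyStep f g S a = f a := by
  rw [greedyStep, dif_neg h]

theorem greedyStep_mem_Icc (hfg : f a ≤ g a) : greedyStep f g S a ∈ Icc (f a) (g a) := by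
  by_cases h : ∃ s ∈ S, s ∈ Icc (f a) (g a)
  · exact (greedyStep_mem h).2
  · rw [greedyStep_of_not_exists h]
    exact ⟨le_rfl, hfg⟩

variable {n₀ a₀ : ℕ}

theorem apply_le_apply_of_forall_lt_and_comp_le (hf : Monotone f)
    (h₀ : ∀ n, n₀ ≤ n → n < f n ∧ f (f n) ≤ g n) (ha : n₀ ≤ a) : f a ≤ g a :=
  (hf (h₀ a ha).1.le).trans (h₀ a ha).2

theorem lt_greedyStep (hf : Monotone f) (h₀ : ∀ n, n₀ ≤ n → n < f n ∧ f (f n) ≤ g n)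
    (ha : n₀ ≤ a) : a < greedyStep f g S a :=
  (h₀ a ha).1.trans_le
    (greedyStep_mem_Icc (apply_le_apply_of_forall_lt_and_comp_le hf h₀ ha)).1

theorem le_greedyStep_iterate (hf : Monotone f) (h₀ : ∀ n, n₀ ≤ n → n < f n ∧ f (f n) ≤ g n)
    (ha₀ : n₀ ≤ a₀) (n : ℕ) : n₀ ≤ (greedyStep f g S)^[n] a₀ := by
  induction n with
  | zero => exact ha₀
  | succ n ih =>
    rw [Function.iterate_succ_apply']
    exact ih.trans (lt_greedyStep hf h₀ ih).le

theorem greedyStep_iterate_succ_mem_Icc (hf : Monotone f)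
    (h₀ : ∀ n, n₀ ≤ n → n < f n ∧ f (f n) ≤ g n) (ha₀ : n₀ ≤ a₀) (n : ℕ) :
    (greedyStep f g S)^[n + 1] a₀ ∈
      Icc (f ((greedyStep f g S)^[n] a₀)) (g ((greedyStep f g S)^[n] a₀)) := by
  rw [Function.iterate_succ_apply']
  exact greedyStep_mem_Icc
    (apply_le_apply_of_forall_lt_and_comp_le hf h₀ (le_greedyStep_iterate hf h₀ ha₀ n))

theorem strictMono_greedyStep_iterate (hf : Monotone f)
    (h₀ : ∀ n, n₀ ≤ n → n < f n ∧ f (f n) ≤ g n) (ha₀ : n₀ ≤ a₀) :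
    StrictMono fun n ↦ (greedyStep f g S)^[n] a₀ :=
  strictMono_nat_of_lt_succ fun n ↦ by
    rw [Function.iterate_succ_apply']
    exact lt_greedyStep hf h₀ (le_greedyStep_iterate hf h₀ ha₀ n)

theorem frequently_greedyStep_iterate_mem (hf : Monotone f)
    (h₀ : ∀ n, n₀ ≤ n → n < f n ∧ f (f n) ≤ g n) (ha₀ : n₀ ≤ a₀)
    (hS : ∃ᶠ n in atTop, n ∈ S) : ∃ᶠ n in atTop, (greedyStep f g S)^[n] a₀ ∈ S := by
  set c : ℕ → ℕ := fun n ↦ (greedyStep f g S)^[n] a₀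
  have hc_succ (n : ℕ) : c (n + 1) = greedyStep f g S (c n) := Function.iterate_succ_apply' ..
  have hc_ge : ∀ n, n₀ ≤ c n := le_greedyStep_iterate hf h₀ ha₀
  rw [frequently_atTop]
  intro N
  by_contra! hN
  have hmiss (k : ℕ) : ¬∃ s ∈ S, s ∈ Icc (f (c (N + k))) (g (c (N + k))) := fun h ↦ by
    have hS_succ := (greedyStep_mem h).1
    rw [← hc_succ] at hS_succ
    exact hN (N + k + 1) (by omega) hS_succ
  have hcover : Ici (f (c N)) ⊆ ⋃ k, Icc (f (c (N + k))) (g (c (N + k))) := by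
    refine Ici_subset_iUnion_Icc_of_le_of_tendsto (u := fun k ↦ f (c (N + k)))
      (v := fun k ↦ g (c (N + k))) (fun k ↦ ?_) ?_
    · rw [← add_assoc, hc_succ, greedyStep_of_not_exists (hmiss k)]
      exact (h₀ _ (hc_ge _)).2
    · have hmono : StrictMono fun k ↦ c (N + k) :=
        (strictMono_greedyStep_iterate hf h₀ ha₀).comp (strictMono_id.const_add N)
      refine tendsto_atTop_mono (fun k ↦ ?_) hmono.tendsto_atTop
      exact (h₀ _ (hc_ge _)).1.le.trans
        (apply_le_apply_of_forall_lt_and_comp_le hf h₀ (hc_ge _))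
  obtain ⟨m, hmS, hm⟩ := (hS.and_eventually (eventually_ge_atTop (f (c N)))).exists
  obtain ⟨k, hk⟩ := mem_iUnion.1 (hcover hm)
  exact hmiss k ⟨m, hmS, hk⟩

end GreedyWalk

theorem limit_from_sparse_subsequences_general (f g : ℕ → ℕ) (hf : Monotone f)
    (n₀ : ℕ) (h₀ : ∀ n, n₀ ≤ n → n < f n ∧ f (f n) ≤ g n)
    (b : ℕ → ℝ) (χ : ℝ)
    (hsubseq : ∀ nk : ℕ → ℕ, (∀ k, 1 ≤ nk k) →
      Filter.Tendsto nk Filter.atTop Filter.atTop →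
      (∀ k, f (nk k) ≤ nk (k + 1) ∧ nk (k + 1) ≤ g (nk k)) →
      Filter.Tendsto (fun k => b (nk k)) Filter.atTop (nhds χ)) :
    Filter.Tendsto b Filter.atTop (nhds χ) := by
  intro U hU
  by_contra hbU
  set S : Set ℕ := {n | b n ∉ U}
  have hn₀ : n₀ ≤ max n₀ 1 := le_max_left _ _
  set c : ℕ → ℕ := fun k ↦ (greedyStep f g S)^[k] (max n₀ 1)
  have hc_mono : StrictMono c := strictMono_greedyStep_iterate hf h₀ hn₀
  have hbc : Tendsto (fun k ↦ b (c k)) atTop (nhds χ) := by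
    refine hsubseq c (fun k ↦ ?_) hc_mono.tendsto_atTop (fun k ↦ ?_)
    · exact (le_max_right n₀ 1).trans (hc_mono.monotone k.zero_le)
    · exact greedyStep_iterate_succ_mem_Icc hf h₀ hn₀ k
  obtain ⟨k, hkS, hkU⟩ := ((frequently_greedyStep_iterate_mem hf h₀ hn₀
    (not_eventually.1 hbU)).and_eventually (hbc hU)).exists
  exact hkS hkU

/-- Let `f, g : ℕ → ℕ` be non-decreasing with `f(n) > n` and
`g(n) ≥ f(f(n))` for all `n ≥ n₀`. If `(b_n)` is a real sequence and `χ > 0` is such that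
`b_{n_k} → χ` for every sequence `(n_k)` of positive integers with `n_k → ∞` and
`f(n_k) ≤ n_{k+1} ≤ g(n_k)` for each `k`, then `b_n → χ`. -/
theorem limit_from_sparse_subsequences (f g : ℕ → ℕ) (hf : Monotone f) (hg : Monotone g)
    (n₀ : ℕ) (h₀ : ∀ n, n₀ ≤ n → n < f n ∧ f (f n) ≤ g n)
    (b : ℕ → ℝ) (χ : ℝ) (hχ : 0 < χ)
    (hsubseq : ∀ nk : ℕ → ℕ, (∀ k, 1 ≤ nk k) →
      Filter.Tendsto nk Filter.atTop Filter.atTop →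
      (∀ k, f (nk k) ≤ nk (k + 1) ∧ nk (k + 1) ≤ g (nk k)) →
      Filter.Tendsto (fun k => b (nk k)) Filter.atTop (nhds χ)) :
    Filter.Tendsto b Filter.atTop (nhds χ) :=
  limit_from_sparse_subsequences_general f g hf n₀ h₀ b χ hsubseq
end
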